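/- arXiv:1304.0302 — 2 statements merged into one kernel-verified Lean document; each statement's English description precedes it below -/
import Mathlib

section
/- Let q = p^{2e} be an even power of a prime p with √q = p^e, and let n ≥ 1. The nonsingular Hermitian hypersurface H_{n-1} ⊂ ℙⁿ defined over F_q by X₀^{√q+1} + X₁^{√q+1} + ⋯ + X_n^{√q+1} = 0 has exactly N_q(H_{n-1}) = (√q^{n+1} + (−1)ⁿ)(√qⁿ + (−1)^{n−1})/(q − 1) points in ℙⁿ(F_q). -/
open MvPolynomial

/-- The number of points of `ℙ^{n}(K)` at which the polynomial `F` vanishes. -/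
noncomputable def projCount {K : Type} [Field K] [Fintype K] {n : ℕ}
    (F : MvPolynomial (Fin n) K) : ℕ :=
  Nat.card {P : Projectivization K (Fin n → K) // MvPolynomial.eval P.rep F = 0}

section HermitianAux

open Finset Polynomial
set_option linter.unusedSectionVars false
set_option linter.unusedVariables false


-- roots of unity count in a finite field
lemma myCardPow {K : Type} [Field K] [Fintype K] (k : ℕ) (hk : 0 < k)
    (hdvd : k ∣ Fintype.card K - 1) : Nat.card {x : K // x ^ k = 1} = k := by
  classical
  obtain ⟨g, hg⟩ := IsCyclic.exists_ofOrder_eq_natCard (α := Kˣ)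
  rw [Nat.card_eq_fintype_card, Fintype.card_units] at hg
  have hq1 : 0 < Fintype.card K - 1 := by
    have := Fintype.one_lt_card (α := K)
    omega
  have hne : (Fintype.card K - 1) / k ≠ 0 :=
    Nat.div_ne_zero_iff_of_dvd hdvd |>.mpr ⟨hq1.ne', hk.ne'⟩
  have horder : orderOf (g ^ ((Fintype.card K - 1) / k)) = k := by
    have hdvd2 : (Fintype.card K - 1) / k ∣ orderOf g := by
      rw [hg]; exact Nat.div_dvd_of_dvd hdvd
    rw [orderOf_pow_of_dvd hne hdvd2, hg, Nat.div_div_self hdvd hq1.ne']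
  have hprim0 := IsPrimitiveRoot.orderOf (g ^ ((Fintype.card K - 1) / k))
  rw [horder] at hprim0
  have hprim : IsPrimitiveRoot ((g ^ ((Fintype.card K - 1) / k) : Kˣ) : K) k :=
    IsPrimitiveRoot.coe_units_iff.mpr hprim0
  rw [Nat.card_eq_fintype_card, Fintype.card_subtype]
  rw [show (univ.filter fun x : K => x ^ k = 1) = nthRootsFinset k (1 : K) by
    ext a; simp [Polynomial.mem_nthRootsFinset hk]]
  exact hprim.card_nthRootsFinset


lemma myCardPowU {K : Type} [Field K] [Fintype K] (k : ℕ) (hk : 0 < k)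
    (hdvd : k ∣ Fintype.card K - 1) : Nat.card {x : Kˣ // x ^ k = 1} = k := by
  have e : {x : Kˣ // x ^ k = 1} ≃ {x : K // x ^ k = 1} := by
    refine ⟨fun x => ⟨(x.1 : K), ?_⟩, fun y => ⟨Units.mk0 y.1 ?_, ?_⟩, ?_, ?_⟩
    · rw [← Units.val_pow_eq_pow_val, x.2, Units.val_one]
    · intro h0
      have h1 := y.2
      rw [h0, zero_pow hk.ne'] at h1
      exact zero_ne_one h1
    · exact Units.ext (by rw [Units.val_pow_eq_pow_val, Units.val_one, Units.val_mk0]; exact y.2)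
    · intro x; exact Subtype.ext (Units.ext rfl)
    · intro y; exact Subtype.ext rfl
  rw [Nat.card_congr e]
  exact myCardPow k hk hdvd


lemma normSurj {K : Type} [Field K] [Fintype K] {s : ℕ} (hs : 2 ≤ s)
    (hq : Fintype.card K = s ^ 2) {c : K} (hc0 : c ≠ 0) (hc : c ^ s = c) :
    ∃ u : K, u ≠ 0 ∧ u ^ (s + 1) = c := by
  classical
  have hfact : (s + 1) * (s - 1) = Fintype.card K - 1 := by
    rw [hq]
    obtain ⟨t, rfl⟩ : ∃ t, s = t + 2 := ⟨s - 2, by omega⟩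
    have h1 : (t + 2) ^ 2 = (t + 2 + 1) * (t + 2 - 1) + 1 := by
      rw [show t + 2 - 1 = t + 1 from rfl]; ring
    omega
  have hdvd1 : (s + 1) ∣ Fintype.card K - 1 := ⟨s - 1, hfact.symm⟩
  have hdvd2 : (s - 1) ∣ Fintype.card K - 1 := ⟨s + 1, by rw [← hfact]; ring⟩
  set φ : Kˣ →* Kˣ := powMonoidHom (s + 1) with hφ
  have hker : Nat.card φ.ker = s + 1 := by
    have e : {x : Kˣ // x ∈ φ.ker} ≃ {x : Kˣ // x ^ (s+1) = 1} :=
      Equiv.subtypeEquivRight (by intro x; simp [hφ, MonoidHom.mem_ker, powMonoidHom_apply])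
    rw [show (Nat.card φ.ker) = Nat.card {x : Kˣ // x ∈ φ.ker} from rfl, Nat.card_congr e]
    exact myCardPowU (s+1) (by omega) hdvd1
  have hrange : Nat.card φ.range * (s + 1) = Fintype.card K - 1 := by
    have h1 := Subgroup.card_eq_card_quotient_mul_card_subgroup (φ.ker)
    have h2 : Nat.card (Kˣ ⧸ φ.ker) = Nat.card φ.range :=
      Nat.card_congr (QuotientGroup.quotientKerEquivRange φ).toEquiv
    rw [h2, hker] at h1
    rw [← h1, Nat.card_eq_fintype_card, Fintype.card_units]
  have hrange' : Nat.card φ.range = s - 1 := by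
    have := hfact
    have hpos : 0 < s + 1 := by omega
    apply Nat.eq_of_mul_eq_mul_right hpos
    rw [hrange, ← hfact]; ring
  have hT : Nat.card {x : Kˣ // x ^ (s - 1) = 1} = s - 1 :=
    myCardPowU (s-1) (by omega) hdvd2
  -- range ⊆ T as sets
  set T : Set Kˣ := {x : Kˣ | x ^ (s - 1) = 1} with hTdef
  have hsub : (φ.range : Set Kˣ) ⊆ T := by
    rintro x ⟨u, rfl⟩
    show (u ^ (s+1)) ^ (s - 1) = 1
    rw [← pow_mul, hfact]
    rw [← Fintype.card_units (α := K)]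
    exact pow_card_eq_one
  have hle : T.ncard ≤ (φ.range : Set Kˣ).ncard := by
    rw [← Nat.card_coe_set_eq, ← Nat.card_coe_set_eq]
    have : Nat.card T = s - 1 := hT
    rw [this]
    have : Nat.card (φ.range : Set Kˣ) = s - 1 := by
      rw [← hrange']; rfl
    rw [this]
  have heq : (φ.range : Set Kˣ) = T := Set.eq_of_subset_of_ncard_le hsub hle (Set.toFinite T)
  -- now conclude
  have hcu : (Units.mk0 c hc0) ∈ T := by
    show (Units.mk0 c hc0) ^ (s - 1) = 1
    apply Units.ext
    rw [Units.val_pow_eq_pow_val, Units.val_one, Units.val_mk0]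
    have : c ^ (s - 1) * c = 1 * c := by
      rw [one_mul, ← pow_succ]
      rw [show s - 1 + 1 = s by omega]
      exact hc
    exact mul_right_cancel₀ hc0 this
  rw [← heq] at hcu
  obtain ⟨u, hu⟩ := hcu
  refine ⟨(u : K), Units.ne_zero u, ?_⟩
  have h2 := congrArg Units.val hu
  rw [Units.val_mk0, show φ u = u ^ (s+1) from rfl, Units.val_pow_eq_pow_val] at h2
  exact h2


noncomputable def cnt (K : Type) [Field K] [Fintype K] (d m : ℕ) (c : K) : ℕ :=
  Nat.card {x : Fin m → K // ∑ i, x i ^ d = c}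

variable {K : Type} [Field K] [Fintype K]

lemma cnt_zero (d : ℕ) : cnt K d 0 0 = 1 := by
  rw [cnt, Nat.card_congr (Equiv.subtypeUnivEquiv (by intro x; simp)),
    Nat.card_eq_fintype_card]
  simp

lemma cnt_smul (d m : ℕ) {u : K} (c : K) (hu : u ≠ 0) :
    cnt K d m (u ^ d * c) = cnt K d m c := by
  refine Nat.card_congr ⟨fun x => ⟨fun i => u⁻¹ * x.1 i, ?_⟩,
    fun y => ⟨fun i => u * y.1 i, ?_⟩, ?_, ?_⟩
  · simp only [mul_pow, ← Finset.mul_sum, x.2]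
    rw [inv_pow, inv_mul_cancel_left₀ (pow_ne_zero d hu)]
  · simp only [mul_pow, ← Finset.mul_sum, y.2]
  · intro x; apply Subtype.ext; funext i
    simp [mul_inv_cancel_left₀ hu]
  · intro y; apply Subtype.ext; funext i
    simp [inv_mul_cancel_left₀ hu]
lemma cnt_succ (d m : ℕ) : cnt K d (m + 1) 0 = ∑ t : K, cnt K d m (-(t ^ d)) := by
  classical
  have e : {x : Fin (m+1) → K // ∑ i, x i ^ d = 0} ≃
      Σ t : K, {y : Fin m → K // ∑ i, y i ^ d = -(t ^ d)} := by
    refine (((Fin.consEquiv (fun _ : Fin (m+1) => K)).symm).subtypeEquiv ?_).trans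
      (Equiv.subtypeProdEquivSigmaSubtype
        (fun (t : K) (y : Fin m → K) => ∑ i, y i ^ d = -(t ^ d)))
    intro x
    have h1 : (((Fin.consEquiv (fun _ : Fin (m+1) => K)).symm) x).1 = x 0 := rfl
    have h2 : (((Fin.consEquiv (fun _ : Fin (m+1) => K)).symm) x).2 = fun i => x i.succ := rfl
    rw [h1, h2, Fin.sum_univ_succ]
    exact ⟨fun h => eq_neg_of_add_eq_zero_right h, fun h => by rw [h]; ring⟩
  calc cnt K d (m+1) 0 = Nat.card (Σ t : K, {y : Fin m → K // ∑ i, y i ^ d = -(t ^ d)}) :=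
        Nat.card_congr e
    _ = ∑ t : K, cnt K d m (-(t ^ d)) := by
        rw [Nat.card_eq_fintype_card, Fintype.card_sigma]
        exact Finset.sum_congr rfl fun t _ => (Nat.card_eq_fintype_card).symm

lemma cnt_total (d m : ℕ) : ∑ c : K, cnt K d m c = Fintype.card K ^ m := by
  classical
  have e := Equiv.sigmaFiberEquiv (fun x : Fin m → K => ∑ i, x i ^ d)
  have : Nat.card (Σ c : K, {x : Fin m → K // ∑ i, x i ^ d = c}) = Fintype.card K ^ m := by
    rw [Nat.card_congr e, Nat.card_eq_fintype_card, Fintype.card_fun, Fintype.card_fin]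
  rw [← this, Nat.card_eq_fintype_card, Fintype.card_sigma]
  exact Finset.sum_congr rfl fun t _ => Nat.card_eq_fintype_card



section Main
variable {K : Type} [Field K] [Fintype K] {p e : ℕ}

lemma charK (hp : p.Prime) (he : 0 < e) (hq : Fintype.card K = p ^ (2 * e)) : CharP K p := by
  obtain ⟨n, hr, hcard⟩ := FiniteField.card K (ringChar K)
  have hdvd : p ∣ ringChar K := by
    have : p ∣ Fintype.card K := by
      rw [hq]
      exact dvd_pow_self p (by omega)
    rw [hcard] at this
    exact hp.dvd_of_dvd_pow this
  have : p = ringChar K := ((Nat.prime_dvd_prime_iff_eq hp hr).mp hdvd)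
  rw [this]
  exact ringChar.charP K

-- norms land in the subfield
lemma norm_mem (hp : p.Prime) (he : 0 < e) (hq : Fintype.card K = p ^ (2 * e)) (x : K) :
    (x ^ (p ^ e + 1)) ^ (p ^ e) = x ^ (p ^ e + 1) := by
  have hcard : Fintype.card K = p ^ e * p ^ e := by rw [hq, two_mul, pow_add]
  have h1 : (x ^ (p ^ e)) ^ (p ^ e) = x := by
    rw [← pow_mul, ← hcard]; exact FiniteField.pow_card x
  rw [← pow_mul, add_mul, one_mul, mul_comm (p ^ e), pow_add, pow_mul, h1, pow_succ']

end Main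

section Main2
variable {K : Type} [Field K] [Fintype K] {p e : ℕ}

lemma eq_i (hp : p.Prime) (he : 0 < e) (hq : Fintype.card K = p ^ (2 * e)) (m : ℕ) :
    cnt K (p ^ e + 1) (m + 1) 0 =
      cnt K (p ^ e + 1) m 0 + (p ^ (2 * e) - 1) * cnt K (p ^ e + 1) m (-1) := by
  classical
  rw [cnt_succ]
  rw [← Finset.add_sum_erase univ _ (mem_univ (0 : K))]
  congr 1
  · rw [zero_pow (by positivity), neg_zero]
  · rw [Finset.sum_congr rfl (fun t ht => ?_), Finset.sum_const,
      Finset.card_erase_of_mem (mem_univ _), Finset.card_univ, hq, smul_eq_mul]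
    have ht0 : t ≠ 0 := (Finset.mem_erase.mp ht).1
    have : -(t ^ (p ^ e + 1)) = t ^ (p ^ e + 1) * (-1) := by ring
    rw [this, cnt_smul _ _ _ ht0]

lemma eq_ii (hp : p.Prime) (he : 0 < e) (hq : Fintype.card K = p ^ (2 * e)) (m : ℕ) :
    cnt K (p ^ e + 1) m 0 + (p ^ e - 1) * cnt K (p ^ e + 1) m (-1) = (p ^ (2 * e)) ^ m := by
  classical
  haveI := charK hp he hq
  haveI : Fact p.Prime := ⟨hp⟩
  haveI : ExpChar K p := ExpChar.prime hp
  have hs2 : 2 ≤ p ^ e := by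
    calc 2 = 2 ^ 1 := by norm_num
    _ ≤ p ^ e := Nat.pow_le_pow_left hp.two_le e |>.trans' (Nat.pow_le_pow_right (by norm_num) he)
  have hqs : Fintype.card K = (p ^ e) ^ 2 := by rw [hq, ← pow_mul, mul_comm]
  -- membership in subfield for any sum of norms
  have hmem : ∀ (x : Fin m → K), (∑ i, x i ^ (p ^ e + 1)) ^ (p ^ e) = ∑ i, x i ^ (p ^ e + 1) := by
    intro x
    rw [sum_pow_char_pow]
    exact Finset.sum_congr rfl fun i _ => norm_mem hp he hq (x i)
  -- cnt vanishes off the subfield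
  have hvanish : ∀ c : K, c ≠ 0 → ¬(c ^ (p ^ e - 1) = 1) → cnt K (p ^ e + 1) m c = 0 := by
    intro c hc0 hc1
    have : IsEmpty {x : Fin m → K // ∑ i, x i ^ (p ^ e + 1) = c} := by
      refine ⟨fun x => hc1 ?_⟩
      have h1 : c ^ (p ^ e) = c := by rw [← x.2]; exact hmem x.1
      have h2 : c ^ (p ^ e - 1) * c = 1 * c := by
        rw [one_mul, ← pow_succ, show p ^ e - 1 + 1 = p ^ e by omega]; exact h1
      exact mul_right_cancel₀ hc0 h2
    exact Nat.card_of_isEmpty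
  -- cnt is constant on nonzero subfield elements
  have hconst : ∀ c : K, c ^ (p ^ e - 1) = 1 → cnt K (p ^ e + 1) m c = cnt K (p ^ e + 1) m (-1) := by
    intro c hc1
    have hc0 : c ≠ 0 := by
      intro h; rw [h, zero_pow (by omega)] at hc1; exact zero_ne_one hc1
    have hcs : c ^ (p ^ e) = c := by
      rw [show p ^ e = p ^ e - 1 + 1 by omega, pow_succ, hc1, one_mul]
    have hncs : (-c) ^ (p ^ e) = -c := by
      rw [neg_pow, neg_one_pow_char_pow K p e, hcs, neg_one_mul]
    obtain ⟨u, hu0, hu⟩ := normSurj hs2 hqs (neg_ne_zero.mpr hc0) hncs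
    have : c = u ^ (p ^ e + 1) * (-1) := by rw [hu]; ring
    rw [this, cnt_smul _ _ _ hu0]
  -- the subfield-star has p^e - 1 elements
  have hcardS : (univ.filter fun c : K => c ^ (p ^ e - 1) = 1).card = p ^ e - 1 := by
    have hdvd : p ^ e - 1 ∣ Fintype.card K - 1 := by
      refine ⟨p ^ e + 1, ?_⟩
      rw [hqs]
      obtain ⟨t, hts⟩ : ∃ t, p ^ e = t + 2 := ⟨p ^ e - 2, by omega⟩
      rw [hts]
      have : (t + 2) ^ 2 = (t + 2 - 1) * (t + 2 + 1) + 1 := by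
        rw [show t + 2 - 1 = t + 1 from rfl]; ring
      omega
    have hmc := myCardPow (K := K) (p ^ e - 1) (by omega) hdvd
    rwa [Nat.card_eq_fintype_card, Fintype.card_subtype] at hmc
  -- assemble
  have key := cnt_total (K := K) (p ^ e + 1) m
  rw [← hq]
  rw [← key]
  have hsplit : (univ : Finset K) = insert 0 (univ.erase 0) := by
    rw [Finset.insert_erase (mem_univ _)]
  rw [hsplit, Finset.sum_insert (notMem_erase _ _)]
  congr 1
  have hsub : (univ.filter fun c : K => c ^ (p ^ e - 1) = 1) ⊆ univ.erase 0 := by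
    intro c hc
    simp only [Finset.mem_filter] at hc
    refine Finset.mem_erase.mpr ⟨?_, mem_univ _⟩
    intro h; rw [h, zero_pow (by omega)] at hc; exact zero_ne_one hc.2
  rw [← Finset.sum_subset hsub (fun c hc hcn => hvanish c (Finset.mem_erase.mp hc).1
      (by simpa using (Finset.mem_filter.not.mp hcn)))]
  rw [Finset.sum_congr rfl (fun c hc => hconst c (Finset.mem_filter.mp hc).2),
    Finset.sum_const, hcardS, smul_eq_mul]
end Main2

lemma main_count {K : Type} [Field K] [Fintype K] {p e : ℕ}
    (hp : p.Prime) (he : 0 < e) (hq : Fintype.card K = p ^ (2 * e)) :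
    ∀ m : ℕ, ((p : ℤ) ^ e) * cnt K (p ^ e + 1) m 0 =
      (((p : ℤ) ^ e) ^ 2) ^ m + (-1) ^ m * ((p : ℤ) ^ e - 1) * ((p : ℤ) ^ e) ^ m := by
  intro m
  induction m with
  | zero => rw [cnt_zero]; ring
  | succ m ih =>
    have hs1 : 1 ≤ p ^ e := Nat.one_le_pow e p hp.pos
    have hq1 : 1 ≤ p ^ (2 * e) := Nat.one_le_pow _ p hp.pos
    have h1 : (cnt K (p ^ e + 1) (m + 1) 0 : ℤ) =
        cnt K (p ^ e + 1) m 0 + ((p : ℤ) ^ (2 * e) - 1) * cnt K (p ^ e + 1) m (-1) := by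
      rw [eq_i hp he hq m]
      push_cast [Nat.cast_sub hq1]
      ring
    have h2 : (cnt K (p ^ e + 1) m 0 : ℤ) + ((p : ℤ) ^ e - 1) * cnt K (p ^ e + 1) m (-1) =
        ((p : ℤ) ^ (2 * e)) ^ m := by
      have := eq_ii hp he hq m
      have hcast := congrArg (fun t : ℕ => (t : ℤ)) this
      push_cast [Nat.cast_sub hs1] at hcast
      convert hcast using 2 <;> push_cast <;> ring
    have hpe : ((p : ℤ) ^ (2 * e)) = ((p : ℤ) ^ e) ^ 2 := by
      rw [← pow_mul, mul_comm]
    rw [hpe] at h1 h2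
    set S : ℤ := (p : ℤ) ^ e
    set A := (cnt K (p ^ e + 1) m 0 : ℤ)
    set B := (cnt K (p ^ e + 1) m (-1) : ℤ)
    rw [h1]
    linear_combination S * (S + 1) * h2 - S * ih


variable {K : Type} [Field K] [Fintype K]


lemma eval_sum_pow (d m : ℕ) (v : Fin m → K) :
    MvPolynomial.eval v (∑ i : Fin m, (X i : MvPolynomial (Fin m) K) ^ d) = ∑ i, v i ^ d := by
  simp

lemma eval_smul_zero_iff (d m : ℕ) (a : Kˣ) (v : Fin m → K) :
    (∑ i, ((a : K) • v) i ^ d = 0) ↔ (∑ i, v i ^ d = 0) := by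
  have h : ∀ i, ((a : K) • v) i ^ d = (a : K) ^ d * v i ^ d := by
    intro i; rw [Pi.smul_apply, smul_eq_mul, mul_pow]
  simp_rw [h, ← Finset.mul_sum]
  constructor
  · intro hh
    rcases mul_eq_zero.mp hh with h0 | h0
    · exact absurd h0 (pow_ne_zero d a.ne_zero)
    · exact h0
  · intro hh; rw [hh, mul_zero]

lemma proj_count_eq (d m : ℕ) (hd : 0 < d) (hm : 0 < m) :
    cnt K d m 0 =
      (Fintype.card K - 1) * projCount (∑ i : Fin m, (X i : MvPolynomial (Fin m) K) ^ d) + 1 := by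
  classical
  set F := ∑ i : Fin m, (X i : MvPolynomial (Fin m) K) ^ d with hF
  -- nonzero solutions
  have step1 : cnt K d m 0 = Nat.card {v : Fin m → K // v ≠ 0 ∧ ∑ i, v i ^ d = 0} + 1 := by
    have hzero : (0 : Fin m → K) ∈ univ.filter (fun v : Fin m → K => ∑ i, v i ^ d = 0) := by
      simp [zero_pow hd.ne']
    have herase : univ.filter (fun v : Fin m → K => v ≠ 0 ∧ ∑ i, v i ^ d = 0) =
        (univ.filter (fun v : Fin m → K => ∑ i, v i ^ d = 0)).erase 0 := by
      ext v
      simp [Finset.mem_erase, and_comm]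
    have hcards : #(univ.filter (fun v : Fin m → K => ∑ i, v i ^ d = 0)) =
        #(univ.filter (fun v : Fin m → K => v ≠ 0 ∧ ∑ i, v i ^ d = 0)) + 1 := by
      rw [herase, Finset.card_erase_of_mem hzero]
      have hpos : 0 < #(univ.filter (fun v : Fin m → K => ∑ i, v i ^ d = 0)) :=
        Finset.card_pos.mpr ⟨0, hzero⟩
      exact (Nat.succ_pred_eq_of_pos hpos).symm
    rw [cnt, Nat.card_eq_fintype_card, Fintype.card_subtype, hcards,
      Nat.card_eq_fintype_card, Fintype.card_subtype]
  -- bijection with Kˣ × projective zeros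
  have step2 : Nat.card {v : Fin m → K // v ≠ 0 ∧ ∑ i, v i ^ d = 0} =
      (Fintype.card K - 1) * projCount F := by
    have hbij : Function.Bijective
        (fun z : Kˣ × {P : Projectivization K (Fin m → K) // MvPolynomial.eval P.rep F = 0} =>
          (⟨(z.1 : K) • z.2.1.rep,
            smul_ne_zero (Units.ne_zero z.1) z.2.1.rep_nonzero,
            by
              have := z.2.2
              rw [eval_sum_pow] at this
              exact (eval_smul_zero_iff d m z.1 _).mpr this⟩ :
            {v : Fin m → K // v ≠ 0 ∧ ∑ i, v i ^ d = 0})) := by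
      constructor
      · rintro ⟨a, P, hP⟩ ⟨b, Q, hQ⟩ hab
        have h1 : (a : K) • P.rep = (b : K) • Q.rep := congrArg Subtype.val hab
        have hPQ : P = Q := by
          rw [← P.mk_rep, ← Q.mk_rep]
          rw [Projectivization.mk_eq_mk_iff]
          exact ⟨a⁻¹ * b, by
            rw [Units.smul_def, Units.val_mul, mul_smul, ← h1, ← mul_smul, Units.val_inv_eq_inv_val,
              inv_mul_cancel₀ (Units.ne_zero a), one_smul]⟩
        subst hPQ
        obtain ⟨i, hi⟩ := Function.ne_iff.mp P.rep_nonzero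
        have h2 : (a : K) * P.rep i = (b : K) * P.rep i := congrFun h1 i
        have h3 : (a : K) = b := mul_right_cancel₀ (by simpa using hi) h2
        simp only [Prod.mk.injEq, Subtype.mk.injEq]
        exact ⟨Units.ext h3, trivial⟩
      · rintro ⟨v, hv0, hv⟩
        obtain ⟨a, ha⟩ := Projectivization.exists_smul_eq_mk_rep K v hv0
        -- a • v = (mk v).rep
        refine ⟨⟨a⁻¹, ⟨Projectivization.mk K v hv0, ?_⟩⟩, ?_⟩
        · rw [eval_sum_pow, ← ha, Units.smul_def]
          exact (eval_smul_zero_iff d m a v).mpr hv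
        · apply Subtype.ext
          show ((a⁻¹ : Kˣ) : K) • (Projectivization.mk K v hv0).rep = v
          rw [← ha, Units.smul_def, ← mul_smul, Units.val_inv_eq_inv_val,
            inv_mul_cancel₀ (Units.ne_zero a), one_smul]
    rw [← Nat.card_eq_of_bijective _ hbij, Nat.card_prod, Nat.card_eq_fintype_card,
      Fintype.card_units, projCount]
  rw [step1, step2]

end HermitianAux

/-- Bose–Chakravarti: the number of F_q-points of the nonsingular Hermitian hypersurface
`X₀^{√q+1} + ⋯ + X_n^{√q+1} = 0` in ℙⁿ is
`(√q^{n+1} + (−1)ⁿ)(√qⁿ + (−1)^{n−1})/(q−1)`. -/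
theorem hermitian_hypersurface_count
    {p e : ℕ} (hp : p.Prime) (he : 0 < e)
    {K : Type} [Field K] [Fintype K] (hq : Fintype.card K = p ^ (2 * e))
    {n : ℕ} (hn : 1 ≤ n) :
    ((p : ℤ) ^ (2 * e) - 1) *
        (projCount (∑ i : Fin (n + 1), (X i : MvPolynomial (Fin (n + 1)) K) ^ (p ^ e + 1))) =
      (((p : ℤ) ^ e) ^ (n + 1) + (-1) ^ n) * (((p : ℤ) ^ e) ^ n + (-1) ^ (n - 1)) := by
  have hq1 : 1 ≤ p ^ (2 * e) := Nat.one_le_pow _ p hp.pos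
  have hmc := main_count hp he hq (n + 1)
  have hpc := proj_count_eq (K := K) (p ^ e + 1) (n + 1) (by positivity) (by positivity)
  rw [hq] at hpc
  have hcast : (cnt K (p ^ e + 1) (n + 1) 0 : ℤ) =
      ((p : ℤ) ^ (2 * e) - 1) *
        (projCount (∑ i : Fin (n + 1), (X i : MvPolynomial (Fin (n + 1)) K) ^ (p ^ e + 1)) : ℤ)
        + 1 := by
    rw [hpc]
    push_cast [Nat.cast_sub hq1]
    ring
  obtain ⟨k, rfl⟩ : ∃ k, n = k + 1 := ⟨n - 1, by omega⟩
  have hpe : ((p : ℤ) ^ (2 * e)) = ((p : ℤ) ^ e) ^ 2 := by rw [← pow_mul, mul_comm]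
  rw [hpe] at hcast ⊢
  have hS0 : ((p : ℤ) ^ e) ≠ 0 := pow_ne_zero e (Int.natCast_ne_zero.mpr hp.pos.ne')
  apply mul_left_cancel₀ hS0
  rw [show k + 1 - 1 = k from rfl]
  have hparity : ((-1 : ℤ)) ^ k * (-1) ^ k = 1 := by
    rw [← pow_add, ← two_mul, pow_mul]; norm_num
  linear_combination hmc - ((p : ℤ) ^ e) * hcast + ((p : ℤ) ^ e) * hparity
end

section
/- Let q be a power of a prime p and let d be an integer with 2 ≤ d ≤ q + 1. Let S be a surface of degree d in ℙ³ defined over F_q without F_q-plane components, and suppose N_q(S) = (d − 1)q² + dq + 1. Then S contains an F_q-line: there exists a projective line ℓ ⊂ ℙ³ defined over F_q (spanned by two distinct points of ℙ³(F_q)) on which the defining polynomial F vanishes identically. -/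
open MvPolynomial

/-- `F` has an `F_q`-linear component, i.e. a nonzero linear factor over the base field. -/
def hasLinearFactor {K : Type} [Field K] {n : ℕ} (F : MvPolynomial (Fin n) K) : Prop :=
  ∃ L : MvPolynomial (Fin n) K, L ≠ 0 ∧ L.IsHomogeneous 1 ∧ L ∣ F

/-- The restriction of a form `F` on ℙ³ to the line spanned by `v` and `u`, as a binary
form in parameters `(s : t) ↦ s•v + t•u`. -/
noncomputable def lineRestrict {K : Type} [Field K] {n : ℕ}
    (F : MvPolynomial (Fin n) K) (v u : Fin n → K) : MvPolynomial (Fin 2) K :=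
  aeval (fun i => C (v i) * X 0 + C (u i) * X 1) F

open Polynomial

variable {K : Type} [Field K]

lemma homog_sum_eq {n d : ℕ} {F : MvPolynomial (Fin n) K} (h : F.IsHomogeneous d)
    {m : Fin n →₀ ℕ} (hm : MvPolynomial.coeff m F ≠ 0) : ∑ i, m i = d := by
  have := h hm
  rw [Finsupp.weight_apply] at this
  rw [← this, Finsupp.sum, Finset.sum_subset (Finset.subset_univ m.support)]
  · simp
  · intro x _ hx
    simp [Finsupp.notMem_support_iff.mp hx]

lemma eval_smul_homog {n d : ℕ} {F : MvPolynomial (Fin n) K} (h : F.IsHomogeneous d)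
    (a : K) (x : Fin n → K) : MvPolynomial.eval (a • x) F = a ^ d * MvPolynomial.eval x F := by
  rw [MvPolynomial.eval_eq', MvPolynomial.eval_eq', Finset.mul_sum]
  apply Finset.sum_congr rfl
  intro m hm
  rw [MvPolynomial.mem_support_iff] at hm
  have hd := homog_sum_eq h hm
  have : ∏ i, (a • x) i ^ m i = a ^ d * ∏ i, x i ^ m i := by
    simp only [Pi.smul_apply, smul_eq_mul, mul_pow]
    rw [Finset.prod_mul_distrib, Finset.prod_pow_eq_pow_sum, hd]
  rw [this]; ring

lemma eval_aeval_poly {n : ℕ} (F : MvPolynomial (Fin n) K) (g : Fin n → K[X]) (t : K) :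
    Polynomial.eval t (MvPolynomial.aeval g F)
      = MvPolynomial.eval (fun i => Polynomial.eval t (g i)) F := by
  have h := MvPolynomial.comp_aeval_apply (Polynomial.aeval t : K[X] →ₐ[K] K) (f := g) F
  rw [Polynomial.coe_aeval_eq_eval] at h
  rw [h]
  rw [MvPolynomial.aeval_def, Algebra.algebraMap_self, MvPolynomial.eval₂_id]

lemma aeval_line_comp {n : ℕ} (F : MvPolynomial (Fin n) K) (v u : Fin n → K)
    (e : Fin 2 → K[X]) :
    MvPolynomial.aeval e (MvPolynomial.aeval
        (fun i => MvPolynomial.C (v i) * MvPolynomial.X 0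
          + MvPolynomial.C (u i) * MvPolynomial.X 1) F)
      = MvPolynomial.aeval (fun i => Polynomial.C (v i) * e 0 + Polynomial.C (u i) * e 1) F := by
  rw [MvPolynomial.comp_aeval_apply]
  have : (fun i => (MvPolynomial.aeval e) (MvPolynomial.C (v i) * MvPolynomial.X 0
      + MvPolynomial.C (u i) * MvPolynomial.X 1))
      = fun i => Polynomial.C (v i) * e 0 + Polynomial.C (u i) * e 1 := by
    funext i
    simp [MvPolynomial.algebraMap_eq, Polynomial.algebraMap_eq]
  rw [this]

lemma coeff_zero_aeval {n : ℕ} (F : MvPolynomial (Fin n) K) (v u : Fin n → K) :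
    (MvPolynomial.aeval
        (fun i => Polynomial.C (v i) + Polynomial.C (u i) * Polynomial.X) F).coeff 0
      = MvPolynomial.eval v F := by
  rw [Polynomial.coeff_zero_eq_eval_zero, eval_aeval_poly]
  simp

lemma coeff_one_aeval {n : ℕ} (F : MvPolynomial (Fin n) K) (v u : Fin n → K) :
    (MvPolynomial.aeval
        (fun i => Polynomial.C (v i) + Polynomial.C (u i) * Polynomial.X) F).coeff 1
      = ∑ i, u i * MvPolynomial.eval v (MvPolynomial.pderiv i F) := by
  induction F using MvPolynomial.induction_on with
  | C a => simp [MvPolynomial.algebraMap_eq]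
  | add p q hp hq =>
      simp only [map_add, Polynomial.coeff_add, hp, hq, ← Finset.sum_add_distrib]
      apply Finset.sum_congr rfl
      intro i _
      ring
  | mul_X p i hp =>
      classical
      rw [map_mul, MvPolynomial.aeval_X]
      have expand : (MvPolynomial.aeval
            (fun i => Polynomial.C (v i) + Polynomial.C (u i) * Polynomial.X) p
            * (Polynomial.C (v i) + Polynomial.C (u i) * Polynomial.X)).coeff 1
          = (MvPolynomial.aeval
            (fun i => Polynomial.C (v i) + Polynomial.C (u i) * Polynomial.X) p).coeff 1 * v i
            + (MvPolynomial.aeval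
            (fun i => Polynomial.C (v i) + Polynomial.C (u i) * Polynomial.X) p).coeff 0 * u i := by
        rw [mul_add, Polynomial.coeff_add, Polynomial.coeff_mul_C, ← mul_assoc,
          Polynomial.coeff_mul_X, Polynomial.coeff_mul_C]
      rw [expand, hp, coeff_zero_aeval]
      have key : ∀ j : Fin n, MvPolynomial.eval v (MvPolynomial.pderiv j (p * MvPolynomial.X i))
          = MvPolynomial.eval v (MvPolynomial.pderiv j p) * v i
            + (if j = i then MvPolynomial.eval v p else 0) := by
        intro j
        rw [MvPolynomial.pderiv_mul]
        by_cases h : j = i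
        · subst h; simp
        · have : MvPolynomial.pderiv j (MvPolynomial.X i : MvPolynomial (Fin n) K) = 0 :=
            MvPolynomial.pderiv_X_of_ne (Ne.symm h)
          simp [this, h]
      simp only [key, mul_add, mul_ite, mul_zero, Finset.sum_add_distrib]
      rw [Finset.sum_ite_eq' Finset.univ i]
      simp only [Finset.mem_univ, if_true]
      simp only [← mul_assoc]
      rw [← Finset.sum_mul]
      ring

lemma coeff_aeval_first (Q : MvPolynomial (Fin 2) K) (j : ℕ) :
    (MvPolynomial.aeval ![(Polynomial.X : K[X]), 1] Q).coeff j
      = ∑ m ∈ Q.support.filter (fun m => m 0 = j), MvPolynomial.coeff m Q := by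
  rw [MvPolynomial.aeval_def, MvPolynomial.eval₂_eq', Polynomial.finset_sum_coeff,
    Finset.sum_filter]
  apply Finset.sum_congr rfl
  intro m _
  rw [Fin.prod_univ_two]
  show (Polynomial.C (MvPolynomial.coeff m Q) *
    ((Polynomial.X : K[X]) ^ m 0 * (1 : K[X]) ^ m 1)).coeff j = _
  by_cases h : m 0 = j
  · simp [h, Polynomial.coeff_X_pow]
  · simp [h, Polynomial.coeff_X_pow, Ne.symm h]

lemma coeff_aeval_second (Q : MvPolynomial (Fin 2) K) (j : ℕ) :
    (MvPolynomial.aeval ![(1 : K[X]), Polynomial.X] Q).coeff j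
      = ∑ m ∈ Q.support.filter (fun m => m 1 = j), MvPolynomial.coeff m Q := by
  rw [MvPolynomial.aeval_def, MvPolynomial.eval₂_eq', Polynomial.finset_sum_coeff,
    Finset.sum_filter]
  apply Finset.sum_congr rfl
  intro m _
  rw [Fin.prod_univ_two]
  show (Polynomial.C (MvPolynomial.coeff m Q) *
    ((1 : K[X]) ^ m 0 * (Polynomial.X : K[X]) ^ m 1)).coeff j = _
  by_cases h : m 1 = j
  · simp [h, Polynomial.coeff_X_pow]
  · simp [h, Polynomial.coeff_X_pow, Ne.symm h]

lemma support_deg_two {nn : ℕ} {Q : MvPolynomial (Fin 2) K} (hQ : Q.IsHomogeneous nn)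
    {m : Fin 2 →₀ ℕ} (hm : m ∈ Q.support) : m 0 + m 1 = nn := by
  have := homog_sum_eq hQ (MvPolynomial.mem_support_iff.mp hm)
  rwa [Fin.sum_univ_two] at this

lemma corr_swap {nn : ℕ} {Q : MvPolynomial (Fin 2) K} (hQ : Q.IsHomogeneous nn)
    {j : ℕ} (hj : j ≤ nn) :
    (MvPolynomial.aeval ![(Polynomial.X : K[X]), 1] Q).coeff j
      = (MvPolynomial.aeval ![(1 : K[X]), Polynomial.X] Q).coeff (nn - j) := by
  rw [coeff_aeval_first, coeff_aeval_second]
  apply Finset.sum_congr _ (fun _ _ => rfl)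
  apply Finset.filter_congr
  intro m hm
  have := support_deg_two hQ hm
  constructor <;> intro h <;> omega

lemma corr_highdeg_second {nn : ℕ} {Q : MvPolynomial (Fin 2) K} (hQ : Q.IsHomogeneous nn)
    {j : ℕ} (hj : nn < j) :
    (MvPolynomial.aeval ![(1 : K[X]), Polynomial.X] Q).coeff j = 0 := by
  rw [coeff_aeval_second]
  apply Finset.sum_eq_zero
  intro m hm
  rw [Finset.mem_filter] at hm
  have := support_deg_two hQ hm.1
  omega

lemma corr_highdeg_first {nn : ℕ} {Q : MvPolynomial (Fin 2) K} (hQ : Q.IsHomogeneous nn)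
    {j : ℕ} (hj : nn < j) :
    (MvPolynomial.aeval ![(Polynomial.X : K[X]), 1] Q).coeff j = 0 := by
  rw [coeff_aeval_first]
  apply Finset.sum_eq_zero
  intro m hm
  rw [Finset.mem_filter] at hm
  have := support_deg_two hQ hm.1
  omega

lemma corr_inj_first {nn : ℕ} {Q : MvPolynomial (Fin 2) K} (hQ : Q.IsHomogeneous nn)
    (h : MvPolynomial.aeval ![(Polynomial.X : K[X]), 1] Q = 0) : Q = 0 := by
  by_contra h0
  obtain ⟨m, hm⟩ := MvPolynomial.exists_coeff_ne_zero h0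
  have hms : m ∈ Q.support := MvPolynomial.mem_support_iff.mpr hm
  have hfilter : Q.support.filter (fun m' => m' 0 = m 0) = {m} := by
    apply Finset.eq_singleton_iff_unique_mem.mpr
    refine ⟨Finset.mem_filter.mpr ⟨hms, rfl⟩, ?_⟩
    intro m' hm'
    rw [Finset.mem_filter] at hm'
    have h1 := support_deg_two hQ hm'.1
    have h2 := support_deg_two hQ hms
    ext i
    fin_cases i
    · show m' 0 = m 0
      exact hm'.2
    · show m' 1 = m 1
      omega
  have := coeff_aeval_first Q (m 0)
  rw [h, hfilter, Finset.sum_singleton, Polynomial.coeff_zero] at this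
  exact hm this.symm

lemma corr_inj_second {nn : ℕ} {Q : MvPolynomial (Fin 2) K} (hQ : Q.IsHomogeneous nn)
    (h : MvPolynomial.aeval ![(1 : K[X]), Polynomial.X] Q = 0) : Q = 0 := by
  by_contra h0
  obtain ⟨m, hm⟩ := MvPolynomial.exists_coeff_ne_zero h0
  have hms : m ∈ Q.support := MvPolynomial.mem_support_iff.mpr hm
  have hfilter : Q.support.filter (fun m' => m' 1 = m 1) = {m} := by
    apply Finset.eq_singleton_iff_unique_mem.mpr
    refine ⟨Finset.mem_filter.mpr ⟨hms, rfl⟩, ?_⟩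
    intro m' hm'
    rw [Finset.mem_filter] at hm'
    have h1 := support_deg_two hQ hm'.1
    have h2 := support_deg_two hQ hms
    ext i
    fin_cases i
    · show m' 0 = m 0
      omega
    · show m' 1 = m 1
      exact hm'.2
  have := coeff_aeval_second Q (m 1)
  rw [h, hfilter, Finset.sum_singleton, Polynomial.coeff_zero] at this
  exact hm this.symm

lemma lineRestrict_homog {n d : ℕ} {F : MvPolynomial (Fin n) K} (hhom : F.IsHomogeneous d)
    (v u : Fin n → K) : (lineRestrict F v u).IsHomogeneous d := by
  have := hhom.aeval (fun i => (MvPolynomial.C (v i) * MvPolynomial.X 0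
      + MvPolynomial.C (u i) * MvPolynomial.X 1 : MvPolynomial (Fin 2) K)) (fun i =>
    (MvPolynomial.isHomogeneous_C_mul_X (v i) 0).add (MvPolynomial.isHomogeneous_C_mul_X (u i) 1))
  simpa [lineRestrict] using this

section Struct

variable [Fintype K]

lemma struct_line {d : ℕ} (hq2 : 2 ≤ Fintype.card K) (hd : d = Fintype.card K + 1)
    {F : MvPolynomial (Fin 4) K} (hhom : F.IsHomogeneous d)
    (hall : ∀ x : Fin 4 → K, MvPolynomial.eval x F = 0) :
    ∃ v w : Fin 4 → K, LinearIndependent K ![v, w] ∧ lineRestrict F v w = 0 := by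
  classical
  set q := Fintype.card K with hqdef
  -- a nonzero vector v
  set v : Fin 4 → K := fun j => if j = 0 then 1 else 0 with hvdef
  have hv0 : v ≠ 0 := by
    intro h
    have := congrFun h 0
    simp [hvdef] at this
  -- the linear functional
  set c : Fin 4 → K := fun i => MvPolynomial.eval v (MvPolynomial.pderiv i F) with hcdef
  set L : (Fin 4 → K) →ₗ[K] K := ∑ i, c i • LinearMap.proj i with hLdef
  have hLapp : ∀ x : Fin 4 → K, L x = ∑ i, c i * x i := by
    intro x
    rw [hLdef]
    simp [LinearMap.sum_apply]
  -- find u in ker L, not in span v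
  have hker : ¬ (LinearMap.ker L ≤ Submodule.span K {v}) := by
    intro hle
    have h4 : Module.finrank K (Fin 4 → K) = 4 := Module.finrank_fin_fun K
    have h1 : Module.finrank K (LinearMap.range L) + Module.finrank K (LinearMap.ker L) = 4 := by
      rw [LinearMap.finrank_range_add_finrank_ker L, h4]
    have h2 : Module.finrank K (LinearMap.range L) ≤ 1 := by
      have := Submodule.finrank_le (LinearMap.range L)
      simpa [Module.finrank_self] using this
    have h3 : Module.finrank K (LinearMap.ker L) ≤ 1 := by
      have := Submodule.finrank_mono hle
      rwa [finrank_span_singleton hv0] at this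
    omega
  obtain ⟨u, hu_ker, hu_span⟩ := SetLike.not_le_iff_exists.mp hker
  have hu0 : u ≠ 0 := fun h => hu_span (h ▸ Submodule.zero_mem _)
  have hindep : LinearIndependent K ![v, u] := by
    rw [linearIndependent_fin2]
    refine ⟨hu0, fun a ha => ?_⟩
    simp only [Matrix.cons_val_one, Matrix.head_cons, Matrix.cons_val_zero] at ha
    apply hu_span
    have ha0 : a ≠ 0 := by
      intro h
      rw [h, zero_smul] at ha
      exact hv0 ha.symm
    rw [Submodule.mem_span_singleton]
    exact ⟨a⁻¹, by rw [← ha, smul_smul, inv_mul_cancel₀ ha0, one_smul]⟩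
  refine ⟨v, u, hindep, ?_⟩
  set R := lineRestrict F v u with hRdef
  have hR : R.IsHomogeneous d := lineRestrict_homog hhom v u
  set f : K[X] := MvPolynomial.aeval
      (fun i => Polynomial.C (v i) + Polynomial.C (u i) * Polynomial.X) F with hfdef
  have hf_line : MvPolynomial.aeval ![(1 : K[X]), Polynomial.X] R = f := by
    rw [hRdef, lineRestrict, aeval_line_comp, hfdef]
    have he : (fun i => Polynomial.C (v i) * (![(1 : K[X]), Polynomial.X]) 0
        + Polynomial.C (u i) * (![(1 : K[X]), Polynomial.X]) 1)
        = fun i => Polynomial.C (v i) + Polynomial.C (u i) * Polynomial.X := by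
      funext i
      simp
    rw [he]
  have hg_line : MvPolynomial.aeval ![(Polynomial.X : K[X]), 1] R
      = MvPolynomial.aeval
        (fun i => Polynomial.C (v i) * Polynomial.X + Polynomial.C (u i)) F := by
    rw [hRdef, lineRestrict, aeval_line_comp]
    have he : (fun i => Polynomial.C (v i) * (![(Polynomial.X : K[X]), 1]) 0
        + Polynomial.C (u i) * (![(Polynomial.X : K[X]), 1]) 1)
        = fun i => Polynomial.C (v i) * Polynomial.X + Polynomial.C (u i) := by
      funext i
      simp
    rw [he]
  have hf_eval : ∀ t : K, f.eval t = 0 := by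
    intro t
    rw [hfdef, eval_aeval_poly]
    exact hall _
  have hf_deg : f.natDegree ≤ q + 1 := by
    rw [← hf_line, Polynomial.natDegree_le_iff_coeff_eq_zero]
    intro N hN
    exact corr_highdeg_second hR (by omega)
  have hf_top : f.coeff (q + 1) = 0 := by
    have h1 := corr_swap hR (j := 0) (Nat.zero_le _)
    rw [hf_line, hg_line, Nat.sub_zero, Polynomial.coeff_zero_eq_eval_zero,
      eval_aeval_poly] at h1
    rw [← hd, ← h1]
    exact hall _
  have hf_one : f.coeff 1 = 0 := by
    rw [hfdef, coeff_one_aeval]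
    have hk := hu_ker
    rw [LinearMap.mem_ker, hLapp] at hk
    rw [← hk]
    apply Finset.sum_congr rfl
    intro i _
    rw [hcdef]
    ring
  have hXdeg : ((Polynomial.X : K[X]) ^ q - Polynomial.X).natDegree = q := by
    rw [Polynomial.natDegree_sub_eq_left_of_natDegree_lt, Polynomial.natDegree_X_pow]
    rw [Polynomial.natDegree_X, Polynomial.natDegree_X_pow]
    omega
  have hXqX : ((Polynomial.X : K[X]) ^ q - Polynomial.X).Monic := by
    apply Polynomial.monic_X_pow_sub
    rw [Polynomial.degree_X]
    exact_mod_cast (by omega : (1 : ℕ) < q)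
  have hmodzero : f %ₘ (Polynomial.X ^ q - Polynomial.X) = 0 := by
    apply Polynomial.eq_zero_of_natDegree_lt_card_of_eval_eq_zero _ Function.injective_id
    · intro t
      have hsplit := congrArg (Polynomial.eval t) (Polynomial.modByMonic_add_div f (Polynomial.X ^ q - Polynomial.X))
      simp only [Polynomial.eval_add, Polynomial.eval_mul, Polynomial.eval_sub,
        Polynomial.eval_pow, Polynomial.eval_X, hqdef, FiniteField.pow_card, hf_eval t,
        sub_self, zero_mul, add_zero] at hsplit
      simpa using hsplit
    · calc (f %ₘ (Polynomial.X ^ q - Polynomial.X)).natDegree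
          < ((Polynomial.X : K[X]) ^ q - Polynomial.X).natDegree := by
            apply Polynomial.natDegree_modByMonic_lt f hXqX
            intro h1
            rw [h1, Polynomial.natDegree_one] at hXdeg
            omega
        _ ≤ Fintype.card K := by rw [hXdeg]
  have hfact : f = (Polynomial.X ^ q - Polynomial.X) * (f /ₘ (Polynomial.X ^ q - Polynomial.X)) := by
    have hsplit := Polynomial.modByMonic_add_div f (Polynomial.X ^ q - Polynomial.X)
    rw [hmodzero, zero_add] at hsplit
    exact hsplit.symm
  set h := f /ₘ (Polynomial.X ^ q - Polynomial.X) with hh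
  have hhdeg : h.natDegree ≤ 1 := by
    rw [hh, Polynomial.natDegree_divByMonic f hXqX, hXdeg]
    omega
  have hhexp : h = Polynomial.C (h.coeff 1) * Polynomial.X + Polynomial.C (h.coeff 0) :=
    Polynomial.eq_X_add_C_of_natDegree_le_one hhdeg
  set a := h.coeff 1 with hadef
  set b := h.coeff 0 with hbdef
  have hfexp : f = Polynomial.C a * Polynomial.X ^ (q + 1) + Polynomial.C b * Polynomial.X ^ q
      - Polynomial.C a * Polynomial.X ^ 2 - Polynomial.C b * Polynomial.X := by
    rw [hfact, hhexp]
    ring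
  have hcoeff : ∀ N : ℕ, f.coeff N = ((if q + 1 = N then a else 0) + (if q = N then b else 0))
      - (if 2 = N then a else 0) - (if 1 = N then b else 0) := by
    intro N
    rw [hfexp]
    simp only [Polynomial.coeff_sub, Polynomial.coeff_add, Polynomial.coeff_C_mul,
      Polynomial.coeff_X_pow, Polynomial.coeff_X, mul_ite, mul_one, mul_zero]
    simp [eq_comm]
  have ha : a = 0 := by
    have h1 : ¬(q = q + 1) := by omega
    have h2 : ¬(2 = q + 1) := by omega
    have h3 : ¬(1 = q + 1) := by omega
    have htop := hf_top
    rw [hcoeff] at htop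
    simp [h1, h2, h3] at htop
    split_ifs at htop with hq0
    · exact absurd hq0 (by omega)
    · simpa using htop
  have hb : b = 0 := by
    have h1 : ¬(q + 1 = 1) := by omega
    have h2 : ¬(q = 1) := by omega
    have hone := hf_one
    rw [hcoeff] at hone
    simp [h1, h2] at hone
    split_ifs at hone with hq0
    · exact absurd hq0 (by omega)
    · simpa using hone
  have hf0 : f = 0 := by
    rw [hfexp, ha, hb]
    simp
  have : MvPolynomial.aeval ![(1 : K[X]), Polynomial.X] R = 0 := by rw [hf_line, hf0]
  exact corr_inj_second hR this

end Struct

section Count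

variable [Fintype K]

lemma unit_smul_eq_self {n : ℕ} {w : Fin n → K} (hw : w ≠ 0) {b : Kˣ} (h : b • w = w) :
    b = 1 := by
  obtain ⟨i, hi⟩ := Function.ne_iff.mp hw
  have := congrFun h i
  rw [Pi.smul_apply, Units.smul_def, smul_eq_mul] at this
  have hwi : w i ≠ 0 := by simpa using hi
  exact Units.ext (mul_right_cancel₀ hwi (this.trans (one_mul (w i)).symm))

noncomputable def coneEquiv {n d : ℕ} (F : MvPolynomial (Fin n) K) (hhom : F.IsHomogeneous d) :
    {x : Fin n → K // x ≠ 0 ∧ MvPolynomial.eval x F = 0}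
      ≃ {P : Projectivization K (Fin n → K) // MvPolynomial.eval P.rep F = 0} × Kˣ where
  toFun x := ⟨⟨Projectivization.mk K x.1 x.2.1, by
      obtain ⟨a, ha⟩ := Projectivization.exists_smul_eq_mk_rep K x.1 x.2.1
      rw [← ha, Units.smul_def, eval_smul_homog hhom, x.2.2, mul_zero]⟩,
    Classical.choose (Projectivization.exists_smul_eq_mk_rep K x.1 x.2.1)⟩
  invFun Pa := ⟨(Pa.2)⁻¹ • Pa.1.1.rep, by
      constructor
      · rw [Units.smul_def]
        exact smul_ne_zero (Units.ne_zero _) Pa.1.1.rep_nonzero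
      · rw [Units.smul_def, eval_smul_homog hhom, Pa.1.2, mul_zero]⟩
  left_inv x := by
    have hspec := Classical.choose_spec (Projectivization.exists_smul_eq_mk_rep K x.1 x.2.1)
    ext1
    rw [inv_smul_eq_iff]
    exact hspec.symm
  right_inv Pa := by
    obtain ⟨⟨P, hP⟩, a⟩ := Pa
    have hne : (a⁻¹ • P.rep : Fin n → K) ≠ 0 := by
      rw [Units.smul_def]
      exact smul_ne_zero (Units.ne_zero _) P.rep_nonzero
    have hmk : Projectivization.mk K (a⁻¹ • P.rep) hne = P := by
      conv_rhs => rw [← Projectivization.mk_rep P]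
      rw [Projectivization.mk_eq_mk_iff]
      exact ⟨a⁻¹, rfl⟩
    have hspec := Classical.choose_spec
      (Projectivization.exists_smul_eq_mk_rep K (a⁻¹ • P.rep) hne)
    set b := Classical.choose
      (Projectivization.exists_smul_eq_mk_rep K (a⁻¹ • P.rep) hne) with hbdef
    have hrepeq : (Projectivization.mk K (a⁻¹ • P.rep) hne).rep = P.rep := by rw [hmk]
    have hba : b * a⁻¹ = 1 := by
      apply unit_smul_eq_self P.rep_nonzero
      rw [mul_smul, hspec]
      exact hrepeq
    have hb : b = a := by
      have := congrArg (· * a) hba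
      simpa [mul_assoc] using this
    refine Prod.ext (Subtype.ext ?_) ?_
    · exact hmk
    · exact hb

end Count

lemma fiber_bound {d : ℕ} {F : MvPolynomial (Fin 4) K} (hhom : F.IsHomogeneous d)
    {v u₀ : Fin 4 → K} (hv0 : v ≠ 0) (hFv : MvPolynomial.eval v F = 0)
    (hu₀ : u₀ ∉ Submodule.span K {v})
    (hnl : ∀ v u : Fin 4 → K, LinearIndependent K ![v, u] → lineRestrict F v u ≠ 0)
    (Z : Finset (Fin 4 → K)) (hZ : ∀ x ∈ Z, MvPolynomial.eval x F = 0)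
    (hZfib : ∀ x ∈ Z, x - u₀ ∈ Submodule.span K {v}) :
    Z.card ≤ d - 1 := by
  classical
  have hu0 : u₀ ≠ 0 := fun h => hu₀ (h ▸ Submodule.zero_mem _)
  have hindep : LinearIndependent K ![v, u₀] := by
    rw [linearIndependent_fin2]
    refine ⟨hu0, fun a ha => ?_⟩
    simp only [Matrix.cons_val_one, Matrix.head_cons, Matrix.cons_val_zero] at ha
    apply hu₀
    have ha0 : a ≠ 0 := by
      intro h
      rw [h, zero_smul] at ha
      exact hv0 ha.symm
    rw [Submodule.mem_span_singleton]
    exact ⟨a⁻¹, by rw [← ha, smul_smul, inv_mul_cancel₀ ha0, one_smul]⟩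
  set R := lineRestrict F v u₀ with hRdef
  have hR : R.IsHomogeneous d := lineRestrict_homog hhom v u₀
  have hRne : R ≠ 0 := hnl v u₀ hindep
  set g : K[X] := MvPolynomial.aeval
      (fun i => Polynomial.C (v i) * Polynomial.X + Polynomial.C (u₀ i)) F with hgdef
  have hg_line : MvPolynomial.aeval ![(Polynomial.X : K[X]), 1] R = g := by
    rw [hRdef, lineRestrict, aeval_line_comp, hgdef]
    have he : (fun i => Polynomial.C (v i) * (![(Polynomial.X : K[X]), 1]) 0
        + Polynomial.C (u₀ i) * (![(Polynomial.X : K[X]), 1]) 1)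
        = fun i => Polynomial.C (v i) * Polynomial.X + Polynomial.C (u₀ i) := by
      funext i
      simp
    rw [he]
  have hgne : g ≠ 0 := by
    intro h0
    exact hRne (corr_inj_first hR (by rw [hg_line, h0]))
  have hgtop : g.coeff d = 0 := by
    have h1 := corr_swap hR (j := d) le_rfl
    rw [hg_line, Nat.sub_self] at h1
    have h2 : (MvPolynomial.aeval ![(1 : K[X]), Polynomial.X] R).coeff 0 = 0 := by
      rw [Polynomial.coeff_zero_eq_eval_zero, hRdef, lineRestrict, aeval_line_comp,
        eval_aeval_poly]
      have : (fun i => Polynomial.eval 0 (Polynomial.C (v i) * (![(1:K[X]), Polynomial.X]) 0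
          + Polynomial.C (u₀ i) * (![(1:K[X]), Polynomial.X]) 1)) = v := by
        funext i
        simp
      rw [this]
      exact hFv
    rw [h1, h2]
  have hgdeg : g.natDegree ≤ d - 1 := by
    rw [Polynomial.natDegree_le_iff_coeff_eq_zero]
    intro N hN
    rcases Nat.lt_or_ge d N with h | h
    · rw [← hg_line]
      exact corr_highdeg_first hR h
    · have hNd : N = d := by omega
      rw [hNd]
      exact hgtop
  -- map each x ∈ Z to a root of g
  have hroot : ∀ x ∈ Z, ∃ a : K, a • v = x - u₀ ∧ Polynomial.eval a g = 0 := by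
    intro x hx
    obtain ⟨a, ha⟩ := Submodule.mem_span_singleton.mp (hZfib x hx)
    refine ⟨a, ha, ?_⟩
    rw [hgdef, eval_aeval_poly]
    have : (fun i => Polynomial.eval a (Polynomial.C (v i) * Polynomial.X
        + Polynomial.C (u₀ i))) = x := by
      funext i
      have := congrFun ha i
      simp only [Pi.smul_apply, smul_eq_mul, Pi.sub_apply] at this
      simp only [Polynomial.eval_add, Polynomial.eval_mul, Polynomial.eval_C, Polynomial.eval_X]
      linear_combination this
    rw [this]
    exact hZ x hx
  have hsub : Z ⊆ (g.roots.toFinset).image (fun a => u₀ + a • v) := by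
    intro x hx
    obtain ⟨a, ha, hroota⟩ := hroot x hx
    apply Finset.mem_image.mpr
    refine ⟨a, ?_, by rw [ha]; abel⟩
    rw [Multiset.mem_toFinset, Polynomial.mem_roots hgne]
    exact hroota
  calc Z.card ≤ ((g.roots.toFinset).image (fun a => u₀ + a • v)).card :=
        Finset.card_le_card hsub
    _ ≤ g.roots.toFinset.card := Finset.card_image_le
    _ ≤ Multiset.card g.roots := Multiset.toFinset_card_le _
    _ ≤ g.natDegree := Polynomial.card_roots' g
    _ ≤ d - 1 := hgdeg

section Count2

variable [Fintype K]

lemma count_bound {d : ℕ} {F : MvPolynomial (Fin 4) K} (hhom : F.IsHomogeneous d)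
    (hnl : ∀ v u : Fin 4 → K, LinearIndependent K ![v, u] → lineRestrict F v u ≠ 0)
    {v : Fin 4 → K} (hv0 : v ≠ 0) (hFv : MvPolynomial.eval v F = 0) :
    Nat.card {x : Fin 4 → K // x ≠ 0 ∧ MvPolynomial.eval x F = 0}
      ≤ (Fintype.card K - 1) + (Fintype.card K ^ 3 - 1) * (d - 1) := by
  classical
  set q := Fintype.card K with hq
  set W := Submodule.span K {v} with hW
  haveI : Fintype ((Fin 4 → K) ⧸ W) := Fintype.ofFinite _
  set Z : Finset (Fin 4 → K) :=
    Finset.univ.filter (fun x => x ≠ 0 ∧ MvPolynomial.eval x F = 0) with hZ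
  have hcard : Nat.card {x : Fin 4 → K // x ≠ 0 ∧ MvPolynomial.eval x F = 0} = Z.card := by
    rw [Nat.card_eq_fintype_card, Fintype.card_subtype]
  rw [hcard]
  have hsplit := Finset.card_filter_add_card_filter_not
    (s := Z) (p := fun x => W.mkQ x = 0)
  have h1 : (Z.filter (fun x => W.mkQ x = 0)).card ≤ q - 1 := by
    have hsub : Z.filter (fun x => W.mkQ x = 0)
        ⊆ (Finset.univ.erase (0 : K)).image (fun a => a • v) := by
      intro x hx
      rw [Finset.mem_filter] at hx
      obtain ⟨hxZ, hxπ⟩ := hx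
      rw [hZ, Finset.mem_filter] at hxZ
      have hxW : x ∈ W := by
        rwa [Submodule.mkQ_apply, Submodule.Quotient.mk_eq_zero] at hxπ
      rw [hW, Submodule.mem_span_singleton] at hxW
      obtain ⟨a, ha⟩ := hxW
      have ha0 : a ≠ 0 := by
        intro h
        rw [h, zero_smul] at ha
        exact hxZ.2.1 ha.symm
      exact Finset.mem_image.mpr ⟨a, Finset.mem_erase.mpr ⟨ha0, Finset.mem_univ a⟩, ha⟩
    calc (Z.filter (fun x => W.mkQ x = 0)).card
        ≤ ((Finset.univ.erase (0 : K)).image (fun a => a • v)).card :=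
          Finset.card_le_card hsub
      _ ≤ (Finset.univ.erase (0 : K)).card := Finset.card_image_le
      _ = q - 1 := by rw [Finset.card_erase_of_mem (Finset.mem_univ 0), Finset.card_univ]
  have hQcard : Fintype.card ((Fin 4 → K) ⧸ W) = q ^ 3 := by
    have hfr : Module.finrank K ((Fin 4 → K) ⧸ W) = 3 := by
      have h1 := Submodule.finrank_quotient_add_finrank W
      rw [Module.finrank_fin_fun] at h1
      have h2 : Module.finrank K W = 1 := by
        rw [hW]
        exact finrank_span_singleton hv0
      omega
    rw [Module.card_eq_pow_finrank (K := K), hfr]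
  have h2 : (Z.filter (fun x => ¬ W.mkQ x = 0)).card ≤ (q ^ 3 - 1) * (d - 1) := by
    rw [Finset.card_eq_sum_card_fiberwise
      (f := fun x => W.mkQ x) (t := Finset.univ.filter (fun w : (Fin 4 → K) ⧸ W => w ≠ 0))
      (fun x hx => by
        rw [Finset.mem_coe, Finset.mem_filter] at hx
        exact Finset.mem_coe.mpr (Finset.mem_filter.mpr ⟨Finset.mem_univ _, hx.2⟩))]
    have hfib : ∀ w ∈ Finset.univ.filter (fun w : (Fin 4 → K) ⧸ W => w ≠ 0),
        ((Z.filter (fun x => ¬ W.mkQ x = 0)).filter (fun x => W.mkQ x = w)).card ≤ d - 1 := by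
      intro w hw
      rw [Finset.mem_filter] at hw
      obtain ⟨u₀, hu₀⟩ := W.mkQ_surjective w
      have hu₀W : u₀ ∉ W := by
        intro h
        apply hw.2
        rw [← hu₀]
        rwa [Submodule.mkQ_apply, Submodule.Quotient.mk_eq_zero]
      apply fiber_bound hhom hv0 hFv (hW ▸ hu₀W) hnl
      · intro x hx
        rw [Finset.mem_filter, Finset.mem_filter, hZ, Finset.mem_filter] at hx
        exact hx.1.1.2.2
      · intro x hx
        rw [Finset.mem_filter] at hx
        have : W.mkQ x = W.mkQ u₀ := by rw [hx.2, hu₀]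
        rw [Submodule.mkQ_apply, Submodule.mkQ_apply,
          Submodule.Quotient.eq] at this
        exact hW ▸ this
    calc ∑ w ∈ Finset.univ.filter (fun w : (Fin 4 → K) ⧸ W => w ≠ 0),
          ((Z.filter (fun x => ¬ W.mkQ x = 0)).filter (fun x => W.mkQ x = w)).card
        ≤ ∑ _w ∈ Finset.univ.filter (fun w : (Fin 4 → K) ⧸ W => w ≠ 0), (d - 1) :=
          Finset.sum_le_sum hfib
      _ = (Finset.univ.filter (fun w : (Fin 4 → K) ⧸ W => w ≠ 0)).card * (d - 1) := by
          rw [Finset.sum_const, smul_eq_mul]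
      _ ≤ (q ^ 3 - 1) * (d - 1) := by
          apply Nat.mul_le_mul_right
          have : (Finset.univ.filter (fun w : (Fin 4 → K) ⧸ W => w ≠ 0)).card
              = Fintype.card ((Fin 4 → K) ⧸ W) - 1 := by
            rw [Finset.filter_ne', Finset.card_erase_of_mem (Finset.mem_univ 0),
              Finset.card_univ]
          rw [this, hQcard]
  omega

end Count2

/-- A surface of degree `d` (2 ≤ d ≤ q+1) in ℙ³ over `F_q` without `F_q`-plane components
attaining the elementary bound `(d-1)q² + dq + 1` contains an `F_q`-line. -/
theorem contains_line
    {p m : ℕ} (hp : p.Prime) (hm : 0 < m)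
    {K : Type} [Field K] [Fintype K] (hq : Fintype.card K = p ^ m)
    {d : ℕ} (hd2 : 2 ≤ d) (hdq : d ≤ Fintype.card K + 1)
    (F : MvPolynomial (Fin 4) K) (hF0 : F ≠ 0)
    (hhom : F.IsHomogeneous d)
    (hlin : ¬ hasLinearFactor F)
    (hN : projCount F = (d - 1) * Fintype.card K ^ 2 + d * Fintype.card K + 1) :
    ∃ v w : Fin 4 → K, LinearIndependent K ![v, w] ∧ lineRestrict F v w = 0 := by
  classical
  have hq2 : 2 ≤ Fintype.card K := by
    rw [hq]
    calc 2 = 2 ^ 1 := (pow_one 2).symm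
      _ ≤ 2 ^ m := Nat.pow_le_pow_right (by norm_num) hm
      _ ≤ p ^ m := Nat.pow_le_pow_left hp.two_le m
  by_contra hcon
  push_neg at hcon
  have hnl : ∀ v u : Fin 4 → K, LinearIndependent K ![v, u] → lineRestrict F v u ≠ 0 := hcon
  -- a projective point on the surface
  have hpos : 0 < Nat.card {P : Projectivization K (Fin 4 → K) //
      MvPolynomial.eval P.rep F = 0} := by
    have : projCount F = (d - 1) * Fintype.card K ^ 2 + d * Fintype.card K + 1 := hN
    rw [projCount] at this
    rw [this]
    exact Nat.succ_pos _
  obtain ⟨P⟩ := (Nat.card_pos_iff.mp hpos).1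
  have hv0 : P.1.rep ≠ 0 := P.1.rep_nonzero
  have hFv : MvPolynomial.eval P.1.rep F = 0 := P.2
  -- affine cardinality
  have hZcard : Nat.card {x : Fin 4 → K // x ≠ 0 ∧ MvPolynomial.eval x F = 0}
      = projCount F * (Fintype.card K - 1) := by
    rw [Nat.card_congr (coneEquiv F hhom), Nat.card_prod, Nat.card_eq_fintype_card (α := Kˣ),
      Fintype.card_units]
    rfl
  have hbound := count_bound hhom hnl hv0 hFv
  rw [hZcard, hN] at hbound
  set q := Fintype.card K with hqq
  -- derive d = q + 1
  have hd : d = q + 1 := by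
    have h1 : (1 : ℕ) ≤ q := by omega
    have h3 : (1 : ℕ) ≤ q ^ 3 := Nat.one_le_pow _ _ (by omega)
    have h4 : (1 : ℕ) ≤ d := by omega
    zify [h1, h3, h4] at hbound
    have hq2' : (2 : ℤ) ≤ (q : ℤ) := by exact_mod_cast hq2
    have hd2' : (2 : ℤ) ≤ (d : ℤ) := by exact_mod_cast hd2
    have hdq' : (d : ℤ) ≤ (q : ℤ) + 1 := by exact_mod_cast hdq
    have : (q : ℤ) + 1 ≤ (d : ℤ) := by nlinarith [hbound, hq2', hd2']
    omega
  -- hence F vanishes at every nonzero point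
  have hZall : Nat.card {x : Fin 4 → K // x ≠ 0 ∧ MvPolynomial.eval x F = 0}
      = q ^ 4 - 1 := by
    rw [hZcard, hN, hd]
    have h1 : (1 : ℕ) ≤ q := by omega
    have h41 : (1 : ℕ) ≤ q ^ 4 := Nat.one_le_pow _ _ (by omega)
    zify [h1, h41, (by omega : 1 ≤ q + 1)]
    ring
  have hall : ∀ x : Fin 4 → K, MvPolynomial.eval x F = 0 := by
    have hfull : ∀ x : Fin 4 → K, x ≠ 0 → MvPolynomial.eval x F = 0 := by
      by_contra hbad
      push_neg at hbad
      obtain ⟨x₀, hx₀ne, hx₀F⟩ := hbad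
      set Z : Finset (Fin 4 → K) :=
        Finset.univ.filter (fun x => x ≠ 0 ∧ MvPolynomial.eval x F = 0) with hZdef
      have hZc : Z.card = q ^ 4 - 1 := by
        rw [← hZall, Nat.card_eq_fintype_card, Fintype.card_subtype]
      have hsub : Z ⊆ (Finset.univ.filter (fun x : Fin 4 → K => x ≠ 0)).erase x₀ := by
        intro y hy
        rw [hZdef, Finset.mem_filter] at hy
        apply Finset.mem_erase.mpr
        refine ⟨?_, Finset.mem_filter.mpr ⟨Finset.mem_univ _, hy.2.1⟩⟩
        intro h
        rw [h] at hy
        exact hx₀F hy.2.2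
      have hcard2 : ((Finset.univ.filter (fun x : Fin 4 → K => x ≠ 0)).erase x₀).card
          = q ^ 4 - 1 - 1 := by
        rw [Finset.card_erase_of_mem, Finset.filter_ne', Finset.card_erase_of_mem
          (Finset.mem_univ _), Finset.card_univ, Fintype.card_fun]
        · simp [hqq]
        · rw [Finset.mem_filter]
          exact ⟨Finset.mem_univ _, hx₀ne⟩
      have := Finset.card_le_card hsub
      rw [hZc, hcard2] at this
      have hq4 : 2 ≤ q ^ 4 := by
        calc 2 ≤ q := hq2
          _ ≤ q ^ 4 := Nat.le_self_pow (by norm_num) q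
      omega
    intro x
    by_cases hx : x = 0
    · rw [hx]
      have h0 : MvPolynomial.coeff 0 F = 0 := by
        apply hhom.coeff_eq_zero
        rw [map_zero]
        omega
      rw [MvPolynomial.eval_zero]
      exact h0
    · exact hfull x hx
  obtain ⟨v', w', hA, hB⟩ := struct_line hq2 hd hhom hall
  exact hnl v' w' hA hB
end
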